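/- Let ψ > 0 and ε ≥ 0, and let R(x) = Φ(ψ + Φ⁻¹(x)) on (0,1). Then at the point x₀ = Φ(−ψ/2 − ε/ψ) ∈ (0,1), the derivative of R equals e^ε, i.e. deriv R x₀ = e^ε, and R(x₀) = Φ(ψ/2 − ε/ψ); consequently the tangent line to the graph of R with slope e^ε has y-intercept R(x₀) − e^ε·x₀ = Φ(ψ/2 − ε/ψ) − e^ε·Φ(−ψ/2 − ε/ψ). -/

import Mathlib

open MeasureTheory ProbabilityTheory Real

/-- `Φ`, the cumulative distribution function of the standard normal distribution. -/
noncomputable def stdNormalCDF (x : ℝ) : ℝ := ((gaussianReal 0 1) (Set.Iic x)).toReal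

/-- `Φ⁻¹`, the standard normal quantile function (inverse of `Φ`). -/
noncomputable def stdNormalCDFInv : ℝ → ℝ := Function.invFun stdNormalCDF

/-!
With `t = Φ⁻¹ x`, the chain rule and the inverse function rule give
`R'(Φ t) = φ(ψ + t) / φ(t) = exp (-ψ t - ψ² / 2)`, the likelihood ratio of two unit-variance
Gaussians. This equals `e^ε` exactly at `t = -ψ/2 - ε/ψ`, and there `R(Φ t) = Φ(ψ + t)`.
-/

open Set Filter Topology Function
open scoped NNReal

theorem hasDerivAt_invFun_of_strictMono {f : ℝ → ℝ} {f' x : ℝ} (hmono : StrictMono f)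
    (hcont : Continuous f) (hf : HasDerivAt f f' x) (hf' : f' ≠ 0) :
    HasDerivAt (invFun f) f'⁻¹ (f x) := by
  have hrange : range f ∈ 𝓝 (f x) :=
    mem_of_superset (Ioo_mem_nhds (hmono (sub_one_lt x)) (hmono (lt_add_one x)))
      ((intermediate_value_Ioo ((sub_one_lt x).trans (lt_add_one x)).le
        hcont.continuousOn).trans (image_subset_range _ _))
  have hright : ∀ y ∈ range f, f (invFun f y) = y := fun _ hy => invFun_eq hy
  have hleft : LeftInverse (invFun f) f := leftInverse_invFun hmono.injective
  have hinvMono : StrictMonoOn (invFun f) (range f) := fun y₁ hy₁ y₂ hy₂ hlt =>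
    hmono.lt_iff_lt.mp (by rwa [hright y₁ hy₁, hright y₂ hy₂])
  have hinvCont : ContinuousAt (invFun f) (f x) := by
    refine hinvMono.continuousAt_of_image_mem_nhds hrange (univ_mem' fun t => ?_)
    exact ⟨f t, mem_range_self t, hleft t⟩
  exact HasDerivAt.of_local_left_inverse hinvCont (by rwa [hleft x]) hf'
    (eventually_of_mem hrange hright)

theorem continuous_gaussianPDFReal (μ : ℝ) (v : ℝ≥0) : Continuous (gaussianPDFReal μ v) := by
  rw [gaussianPDFReal_def]
  fun_prop

theorem cdf_gaussianReal_eq_integral (μ : ℝ) {v : ℝ≥0} (hv : v ≠ 0) (x : ℝ) :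
    cdf (gaussianReal μ v) x = ∫ t in Iic x, gaussianPDFReal μ v t := by
  rw [cdf_eq_real, measureReal_def, gaussianReal_apply_eq_integral μ hv, ENNReal.toReal_ofReal]
  exact setIntegral_nonneg measurableSet_Iic fun t _ => gaussianPDFReal_nonneg μ v t

theorem hasDerivAt_cdf_gaussianReal (μ : ℝ) {v : ℝ≥0} (hv : v ≠ 0) (x : ℝ) :
    HasDerivAt (cdf (gaussianReal μ v)) (gaussianPDFReal μ v x) x := by
  have hpdf := continuous_gaussianPDFReal μ v
  have hint : ∀ a, IntegrableOn (gaussianPDFReal μ v) (Iic a) := fun _ =>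
    (integrable_gaussianPDFReal μ v).integrableOn
  have hsplit : ⇑(cdf (gaussianReal μ v)) =
      fun y => cdf (gaussianReal μ v) 0 + ∫ t in (0 : ℝ)..y, gaussianPDFReal μ v t := by
    funext y
    rw [cdf_gaussianReal_eq_integral μ hv, cdf_gaussianReal_eq_integral μ hv,
      ← intervalIntegral.integral_Iic_sub_Iic (hint 0) (hint y), add_sub_cancel]
  rw [hsplit]
  exact (intervalIntegral.integral_hasDerivAt_right (hpdf.intervalIntegrable _ _)
    hpdf.stronglyMeasurable.stronglyMeasurableAtFilter hpdf.continuousAt).const_add _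

theorem strictMono_cdf_gaussianReal (μ : ℝ) {v : ℝ≥0} (hv : v ≠ 0) :
    StrictMono (cdf (gaussianReal μ v)) :=
  strictMono_of_hasDerivAt_pos (hasDerivAt_cdf_gaussianReal μ hv)
    fun x => gaussianPDFReal_pos μ v x hv

theorem cdf_gaussianReal_mem_Ioo (μ : ℝ) {v : ℝ≥0} (hv : v ≠ 0) (x : ℝ) :
    cdf (gaussianReal μ v) x ∈ Ioo 0 1 :=
  ⟨(cdf_nonneg _ (x - 1)).trans_lt (strictMono_cdf_gaussianReal μ hv (sub_one_lt x)),
    (strictMono_cdf_gaussianReal μ hv (lt_add_one x)).trans_le (cdf_le_one _ (x + 1))⟩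

theorem gaussianPDFReal_const_add_div (μ : ℝ) {v : ℝ≥0} (hv : v ≠ 0) (a x : ℝ) :
    gaussianPDFReal μ v (a + x) / gaussianPDFReal μ v x =
      exp (-(a * (2 * (x - μ) + a)) / (2 * v)) := by
  have hsqrt : √(2 * π * v) ≠ 0 := by positivity
  simp only [gaussianPDFReal_def]
  rw [mul_div_mul_left _ _ (inv_ne_zero hsqrt), ← exp_sub]
  congr 1
  ring

theorem stdNormalCDF_eq_cdf : stdNormalCDF = cdf (gaussianReal 0 1) := by
  funext x
  rw [cdf_eq_real, measureReal_def, stdNormalCDF]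

theorem stdNormalCDFInv_stdNormalCDF (x : ℝ) : stdNormalCDFInv (stdNormalCDF x) = x :=
  leftInverse_invFun (stdNormalCDF_eq_cdf ▸ (strictMono_cdf_gaussianReal 0 one_ne_zero).injective) x

theorem hasDerivAt_stdNormalCDF (x : ℝ) :
    HasDerivAt stdNormalCDF (gaussianPDFReal 0 1 x) x :=
  stdNormalCDF_eq_cdf ▸ hasDerivAt_cdf_gaussianReal 0 one_ne_zero x

theorem hasDerivAt_stdNormalCDFInv (x : ℝ) :
    HasDerivAt stdNormalCDFInv (gaussianPDFReal 0 1 x)⁻¹ (stdNormalCDF x) :=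
  hasDerivAt_invFun_of_strictMono (stdNormalCDF_eq_cdf ▸ strictMono_cdf_gaussianReal 0 one_ne_zero)
    (continuous_iff_continuousAt.mpr fun y => (hasDerivAt_stdNormalCDF y).continuousAt)
    (hasDerivAt_stdNormalCDF x) (gaussianPDFReal_pos 0 1 x one_ne_zero).ne'

theorem hasDerivAt_stdNormalCDF_const_add_stdNormalCDFInv (ψ t : ℝ) :
    HasDerivAt (fun x => stdNormalCDF (ψ + stdNormalCDFInv x))
      (gaussianPDFReal 0 1 (ψ + t) / gaussianPDFReal 0 1 t) (stdNormalCDF t) := by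
  have houter : HasDerivAt stdNormalCDF (gaussianPDFReal 0 1 (ψ + t))
      (ψ + stdNormalCDFInv (stdNormalCDF t)) := by
    rw [stdNormalCDFInv_stdNormalCDF]
    exact hasDerivAt_stdNormalCDF (ψ + t)
  exact houter.comp (h := fun x => ψ + stdNormalCDFInv x) _
    ((hasDerivAt_stdNormalCDFInv t).const_add ψ)

theorem roc_tangent_general (ψ ε : ℝ) (hψ : 0 < ψ) :
    stdNormalCDF (-ψ / 2 - ε / ψ) ∈ Set.Ioo (0 : ℝ) 1 ∧
    deriv (fun x => stdNormalCDF (ψ + stdNormalCDFInv x))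
        (stdNormalCDF (-ψ / 2 - ε / ψ)) = Real.exp ε ∧
    (fun x => stdNormalCDF (ψ + stdNormalCDFInv x)) (stdNormalCDF (-ψ / 2 - ε / ψ)) =
      stdNormalCDF (ψ / 2 - ε / ψ) ∧
    (fun x => stdNormalCDF (ψ + stdNormalCDFInv x)) (stdNormalCDF (-ψ / 2 - ε / ψ)) -
        Real.exp ε * stdNormalCDF (-ψ / 2 - ε / ψ) =
      stdNormalCDF (ψ / 2 - ε / ψ) - Real.exp ε * stdNormalCDF (-ψ / 2 - ε / ψ) := by
  set t₀ := -ψ / 2 - ε / ψ with ht₀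
  have hvalue : stdNormalCDF (ψ + stdNormalCDFInv (stdNormalCDF t₀)) =
      stdNormalCDF (ψ / 2 - ε / ψ) := by
    rw [stdNormalCDFInv_stdNormalCDF, ht₀]
    ring_nf
  refine ⟨stdNormalCDF_eq_cdf ▸ cdf_gaussianReal_mem_Ioo 0 one_ne_zero t₀, ?_, hvalue,
    by simp only [hvalue]⟩
  rw [(hasDerivAt_stdNormalCDF_const_add_stdNormalCDFInv ψ t₀).deriv,
    gaussianPDFReal_const_add_div 0 one_ne_zero, ht₀]
  congr 1
  field_simp
  push_cast
  ring

/-- for `ψ > 0`, `ε ≥ 0` and the ROC curve `R(x) = Φ(ψ + Φ⁻¹(x))`, at the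
point `x₀ = Φ(−ψ/2 − ε/ψ) ∈ (0,1)` the derivative of `R` equals `e^ε`,
`R(x₀) = Φ(ψ/2 − ε/ψ)`, and the tangent with slope `e^ε` has `y`-intercept
`R(x₀) − e^ε·x₀ = Φ(ψ/2 − ε/ψ) − e^ε·Φ(−ψ/2 − ε/ψ)`. -/
theorem roc_tangent (ψ ε : ℝ) (hψ : 0 < ψ) (hε : 0 ≤ ε) :
    stdNormalCDF (-ψ / 2 - ε / ψ) ∈ Set.Ioo (0 : ℝ) 1 ∧
    deriv (fun x => stdNormalCDF (ψ + stdNormalCDFInv x))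
        (stdNormalCDF (-ψ / 2 - ε / ψ)) = Real.exp ε ∧
    (fun x => stdNormalCDF (ψ + stdNormalCDFInv x)) (stdNormalCDF (-ψ / 2 - ε / ψ)) =
      stdNormalCDF (ψ / 2 - ε / ψ) ∧
    (fun x => stdNormalCDF (ψ + stdNormalCDFInv x)) (stdNormalCDF (-ψ / 2 - ε / ψ)) -
        Real.exp ε * stdNormalCDF (-ψ / 2 - ε / ψ) =
      stdNormalCDF (ψ / 2 - ε / ψ) - Real.exp ε * stdNormalCDF (-ψ / 2 - ε / ψ) :=
  roc_tangent_general ψ ε hψ
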